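/- In the complementary-labels model with corruption probability α ∈ [0,1), if the class of functions F satisfies Assumption 1, then letting κ'_α = (1+α)/(1−α), the neural network distance satisfies d_F(P, Q) ≤ κ'_α · d_F(P̃, Q̃). (Corollary 2, eq. (16).) -/

import Mathlib

open scoped BigOperators
open MeasureTheory

/-- `P` is a probability mass function on `Z`. -/
def IsPMF {Z : Type*} (P : Z → ℝ) : Prop :=
  (∀ z, 0 ≤ P z) ∧ Summable P ∧ ∑' z, P z = 1

/-- The corrupted labeled distribution obtained by passing labels through the channel `C`:
`P̃(x,ỹ) = ∑ j, P(x,j) · C j ỹ`. -/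
noncomputable def corrupt {X : Type*} {k : ℕ} (P : X × Fin k → ℝ)
    (C : Matrix (Fin k) (Fin k) ℝ) : X × Fin k → ℝ :=
  fun z => ∑ j, P (z.1, j) * C j z.2

/-- Parameter vector of the complementary label `u_y = m + y`: mass `a/(m−1)` on every
class label other than `y`, zero elsewhere. -/
noncomputable def compAlpha (m : ℕ) (a : ℝ) (y : Fin m) : Fin (m + m) → ℝ :=
  fun j => if (j : ℕ) < m ∧ (j : ℕ) ≠ (y : ℕ) then a / ((m : ℝ) - 1) else 0

/-- Confusion matrix of the complementary-labels model:
`C = diag(𝟙 − Σ_y α_{u_y}) + Σ_y α_{u_y} e_{m+y}^T`. -/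
noncomputable def compConfusion (m : ℕ) (a : ℝ) :
    Matrix (Fin (m + m)) (Fin (m + m)) ℝ :=
  Matrix.diagonal (fun i => 1 - ∑ y : Fin m, compAlpha m a y i) +
    ∑ y : Fin m, Matrix.vecMulVec (compAlpha m a y) (Pi.single (Fin.natAdd m y) 1)

/-- `‖T‖_∞ = max_i ∑_j |T i j|` for a square real matrix. -/
noncomputable def matInfNorm {k : ℕ} (T : Matrix (Fin k) (Fin k) ℝ) : ℝ :=
  ⨆ i, ∑ j, |T i j|

/-- `(T ∘ f)(x, y) = ∑_ỹ T y ỹ · f (x, ỹ)`. -/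
def chanOp {X : Type*} {k : ℕ} (T : Matrix (Fin k) (Fin k) ℝ)
    (f : X × Fin k → ℝ) : X × Fin k → ℝ :=
  fun z => ∑ j, T z.2 j * f (z.1, j)

/-- Assumption 1: `F = F₁ + F₂ + constants`, where `F₁` is invariant under the action of
matrices of unit `∞`-norm, and `F₂` consists of `[0,1]`-scalings of label-independent
functions from a class `F₂'`. -/
def Assumption1 {X : Type*} {k : ℕ} (F : Set (X × Fin k → ℝ)) : Prop :=
  ∃ F1 F2 : Set (X × Fin k → ℝ),
    F = {f | ∃ f1 ∈ F1, ∃ f2 ∈ F2, ∃ c : ℝ, f = f1 + f2 + Function.const _ c} ∧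
    (∀ T : Matrix (Fin k) (Fin k) ℝ, matInfNorm T = 1 → ∀ f ∈ F1, chanOp T f ∈ F1) ∧
    (∃ F2' : Set (X → ℝ),
      F2 = {h | ∃ g ∈ F2', ∃ a : ℝ, 0 ≤ a ∧ a ≤ 1 ∧ h = fun z => a * g z.1})

/-- Neural network distance w.r.t. a class `F` of discriminators:
`d_F(P, Q) = sup_{f ∈ F} (E_P[f] − E_Q[f])`. -/
noncomputable def nnDist {X : Type*} {k : ℕ} (F : Set (X × Fin k → ℝ))
    (P Q : X × Fin k → ℝ) : ℝ :=
  sSup ((fun f => (∑' z, P z * f z) - ∑' z, Q z * f z) '' F)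

/-!
Write `C` for the confusion matrix and `κ = ‖C⁻¹‖_∞`. For bounded `h`,
`E_{P̃}[h] = E_P[C ∘ h]`, and `C ∘ F ⊆ F` because `C` is row-stochastic, so the corrupted gaps
form a subset of the clean ones (this is what controls the junk value of `sSup` on unbounded sets).
Conversely, for `f = f₁ + f₂ + c ∈ F` the function `h = (C⁻¹/κ) ∘ f₁ + (f₂ + c)/κ` lies in `F`
(unit row sums of `C` fix label-independent terms, and `κ ≥ 1`) and satisfies `f = κ • (C ∘ h)`,
so every clean gap is `κ` times a corrupted gap. Hence `d_F(P, Q) ≤ κ · d_F(P̃, Q̃)`.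
In block form, with `b = a/(m-1)` and `J` the all-ones matrix,
`C = [[(1-a) I, b (J - I)], [0, I]]` and `C⁻¹ = [[(1-a)⁻¹ I, -b (1-a)⁻¹ (J - I)], [0, I]]`,
whose rows have absolute sums `(1 + a)/(1 - a)` and `1`.
-/

open Matrix

section MatInfNorm

variable {k : ℕ}

lemma sum_abs_le_matInfNorm (T : Matrix (Fin k) (Fin k) ℝ) (i : Fin k) :
    ∑ j, |T i j| ≤ matInfNorm T :=
  le_ciSup (f := fun i => ∑ j, |T i j|) (Set.finite_range _).bddAbove i

lemma matInfNorm_le [NeZero k] {T : Matrix (Fin k) (Fin k) ℝ} {c : ℝ}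
    (h : ∀ i, ∑ j, |T i j| ≤ c) : matInfNorm T ≤ c :=
  ciSup_le h

lemma matInfNorm_smul {c : ℝ} (hc : 0 ≤ c) (T : Matrix (Fin k) (Fin k) ℝ) :
    matInfNorm (c • T) = c * matInfNorm T := by
  simp only [matInfNorm, Matrix.smul_apply, smul_eq_mul, abs_mul, abs_of_nonneg hc,
    ← Finset.mul_sum, Real.mul_iSup_of_nonneg hc]

lemma matInfNorm_of_mem_rowStochastic [NeZero k] {C : Matrix (Fin k) (Fin k) ℝ}
    (hC : C ∈ rowStochastic ℝ (Fin k)) : matInfNorm C = 1 := by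
  have hrow (i : Fin k) : ∑ j, |C i j| = 1 := by
    simp_rw [abs_of_nonneg (nonneg_of_mem_rowStochastic hC)]
    exact sum_row_of_mem_rowStochastic hC i
  exact le_antisymm (matInfNorm_le fun i => (hrow i).le) (hrow 0 ▸ sum_abs_le_matInfNorm C 0)

/-- `B` inherits the unit row sums of `C`. -/
lemma one_le_matInfNorm_of_mul_eq_one [NeZero k] {C B : Matrix (Fin k) (Fin k) ℝ}
    (hC : C *ᵥ 1 = 1) (hCB : C * B = 1) : 1 ≤ matInfNorm B := by
  have hB : B *ᵥ 1 = 1 := by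
    rw [← hC, mulVec_mulVec, mul_eq_one_comm.mp hCB, one_mulVec, hC]
  have hrow : ∑ j, B 0 j = 1 := by simpa [mulVec, dotProduct] using congrFun hB 0
  calc (1 : ℝ) = |∑ j, B 0 j| := by rw [hrow, abs_one]
    _ ≤ ∑ j, |B 0 j| := Finset.abs_sum_le_sum_abs _ _
    _ ≤ matInfNorm B := sum_abs_le_matInfNorm B 0

lemma Matrix.sum_abs_reindex_apply {n : Type*} [Fintype n] (e : n ≃ Fin k) (M : Matrix n n ℝ)
    (i : Fin k) : ∑ j, |reindex e e M i j| = ∑ t, |M (e.symm i) t| :=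
  e.symm.sum_comp fun t => |M (e.symm i) t|

end MatInfNorm

section Channel

variable {X : Type*} {k : ℕ}

lemma chanOp_chanOp (A B : Matrix (Fin k) (Fin k) ℝ) (f : X × Fin k → ℝ) :
    chanOp A (chanOp B f) = chanOp (A * B) f := by
  funext z
  simp only [chanOp, Matrix.mul_apply, Finset.mul_sum, Finset.sum_mul, mul_assoc]
  exact Finset.sum_comm

lemma chanOp_one (f : X × Fin k → ℝ) : chanOp 1 f = f := by
  funext z
  simp [chanOp, Matrix.one_apply]

lemma chanOp_smul_left (c : ℝ) (T : Matrix (Fin k) (Fin k) ℝ) (f : X × Fin k → ℝ) :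
    chanOp (c • T) f = c • chanOp T f := by
  funext z
  simp [chanOp, Finset.mul_sum, mul_assoc]

lemma chanOp_add_comp_fst_add_const {T : Matrix (Fin k) (Fin k) ℝ} (hT : T *ᵥ 1 = 1)
    (f : X × Fin k → ℝ) (g : X → ℝ) (c : ℝ) :
    chanOp T (f + (fun z => g z.1) + Function.const _ c) =
      chanOp T f + (fun z => g z.1) + Function.const _ c := by
  funext z
  have hrow : ∑ j, T z.2 j = 1 := by simpa [Matrix.mulVec, dotProduct] using congrFun hT z.2
  simp [chanOp, mul_add, Finset.sum_add_distrib, ← Finset.sum_mul, hrow]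

lemma abs_chanOp_le {T : Matrix (Fin k) (Fin k) ℝ} {f : X × Fin k → ℝ} {B : ℝ}
    (hf : ∀ z, |f z| ≤ B) (z : X × Fin k) :
    |chanOp T f z| ≤ (∑ j, |T z.2 j|) * B := by
  rw [Finset.sum_mul]
  refine (Finset.abs_sum_le_sum_abs _ _).trans (Finset.sum_le_sum fun j _ => ?_)
  rw [abs_mul]
  exact mul_le_mul_of_nonneg_left (hf _) (abs_nonneg _)

lemma Summable.mul_of_abs_le {ι : Type*} {p g : ι → ℝ} (hp : Summable p) {B : ℝ}
    (hg : ∀ i, |g i| ≤ B) : Summable fun i => p i * g i :=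
  (hp.abs.mul_right B).of_norm_bounded fun i => by
    rw [Real.norm_eq_abs, abs_mul]
    exact mul_le_mul_of_nonneg_left (hg i) (abs_nonneg _)

lemma Summable.comp_fst {α β : Type*} [Fintype β] {g : α → ℝ} (hg : Summable g) :
    Summable fun p : α × β => g p.1 := by
  refine Summable.of_abs ((summable_prod_of_nonneg fun _ => abs_nonneg _).2
    ⟨fun _ => Summable.of_finite, ?_⟩)
  simpa [tsum_fintype] using hg.abs.mul_left (Fintype.card β : ℝ)

lemma summable_corrupt {P : X × Fin k → ℝ} (hP : Summable P) (C : Matrix (Fin k) (Fin k) ℝ) :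
    Summable (corrupt P C) :=
  summable_sum fun j _ => ((hP.comp_injective (Prod.mk_left_injective j)).comp_fst).mul_of_abs_le
    fun z => Finset.single_le_sum (f := fun l => |C j l|) (fun _ _ => abs_nonneg _)
      (Finset.mem_univ z.2)

lemma tsum_corrupt_mul {P : X × Fin k → ℝ} (hP : Summable P) (C : Matrix (Fin k) (Fin k) ℝ)
    {f : X × Fin k → ℝ} {B : ℝ} (hf : ∀ z, |f z| ≤ B) :
    ∑' z, corrupt P C z * f z = ∑' z, P z * chanOp C f z := by
  have hK : ∀ z : X × Fin k, |chanOp C f z| ≤ (∑ i, ∑ j, |C i j|) * B := fun z =>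
    (abs_chanOp_le hf z).trans (mul_le_mul_of_nonneg_right
      (Finset.single_le_sum (f := fun i => ∑ j, |C i j|) (fun i _ => Finset.sum_nonneg
        fun j _ => abs_nonneg _) (Finset.mem_univ z.2)) ((abs_nonneg _).trans (hf z)))
  rw [Summable.tsum_prod' ((summable_corrupt hP C).mul_of_abs_le hf)
      fun _ => Summable.of_finite,
    Summable.tsum_prod' (hP.mul_of_abs_le hK) fun _ => Summable.of_finite]
  refine tsum_congr fun x => ?_
  simp only [tsum_fintype, corrupt, chanOp, Finset.sum_mul, Finset.mul_sum, mul_assoc]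
  exact Finset.sum_comm

end Channel

section Assumption1

variable {X : Type*} {k : ℕ} {F : Set (X × Fin k → ℝ)}

lemma Assumption1.chanOp_mem (hF : Assumption1 F) {T : Matrix (Fin k) (Fin k) ℝ}
    (hT1 : matInfNorm T = 1) (hT : T *ᵥ 1 = 1) {f : X × Fin k → ℝ} (hf : f ∈ F) :
    chanOp T f ∈ F := by
  obtain ⟨F1, F2, rfl, hF1, F2', rfl⟩ := hF
  obtain ⟨f1, hf1, _, ⟨g, hg, a, ha0, ha1, rfl⟩, c, rfl⟩ := hf
  refine ⟨chanOp T f1, hF1 T hT1 f1 hf1, _, ⟨g, hg, a, ha0, ha1, rfl⟩, c, ?_⟩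
  exact chanOp_add_comp_fst_add_const hT f1 (fun x => a * g x) c

lemma Assumption1.exists_eq_smul_chanOp (hF : Assumption1 F) {C B : Matrix (Fin k) (Fin k) ℝ}
    (hC : C *ᵥ 1 = 1) (hCB : C * B = 1) (hB : 1 ≤ matInfNorm B) {f : X × Fin k → ℝ}
    (hf : f ∈ F) : ∃ h ∈ F, f = matInfNorm B • chanOp C h := by
  set κ := matInfNorm B
  have hκ : 0 < κ := zero_lt_one.trans_le hB
  obtain ⟨F1, F2, rfl, hF1, F2', rfl⟩ := hF
  obtain ⟨f1, hf1, _, ⟨g, hg, a, ha0, ha1, rfl⟩, c, rfl⟩ := hf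
  have hBκ : matInfNorm (κ⁻¹ • B) = 1 := by
    rw [matInfNorm_smul (inv_nonneg.2 hκ.le), inv_mul_cancel₀ hκ.ne']
  refine ⟨chanOp (κ⁻¹ • B) f1 + (fun z => a / κ * g z.1) + Function.const _ (c / κ),
    ⟨_, hF1 _ hBκ f1 hf1, _, ⟨g, hg, a / κ, div_nonneg ha0 hκ.le,
      div_le_one_of_le₀ (ha1.trans hB) hκ.le, rfl⟩, c / κ, rfl⟩, ?_⟩
  rw [chanOp_add_comp_fst_add_const hC _ (fun x => a / κ * g x), chanOp_chanOp,
    Matrix.mul_smul, hCB, chanOp_smul_left, chanOp_one]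
  funext z
  simp only [Pi.add_apply, Pi.smul_apply, smul_eq_mul, Function.const_apply]
  field_simp

end Assumption1

open scoped Pointwise in
lemma Real.sSup_le_mul_sSup_of_subset {S T : Set ℝ} {c : ℝ} (hc : 0 ≤ c) (hTS : T ⊆ S)
    (hST : S ⊆ c • T) : sSup S ≤ c * sSup T := by
  by_cases hT : BddAbove T
  · rcases S.eq_empty_or_nonempty with rfl | hS
    · simp [Set.subset_empty_iff.1 hTS]
    · calc sSup S ≤ sSup (c • T) := csSup_le_csSup (hT.smul_of_nonneg hc) hS hST
        _ = c * sSup T := Real.sSup_smul_of_nonneg hc T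
  · have hS : ¬BddAbove S := fun h => hT (h.mono hTS)
    simp [hS, hT]

theorem nnDist_le_matInfNorm_mul_nnDist_corrupt {X : Type*} {k : ℕ} [NeZero k]
    {F : Set (X × Fin k → ℝ)} (hFbd : ∀ f ∈ F, ∃ B : ℝ, ∀ z, |f z| ≤ B) (hF : Assumption1 F)
    {P Q : X × Fin k → ℝ} (hP : Summable P) (hQ : Summable Q) {C B : Matrix (Fin k) (Fin k) ℝ}
    (hC : C ∈ rowStochastic ℝ (Fin k)) (hCB : C * B = 1) :
    nnDist F P Q ≤ matInfNorm B * nnDist F (corrupt P C) (corrupt Q C) := by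
  have hC1 := one_vecMul_of_mem_rowStochastic hC
  have hB := one_le_matInfNorm_of_mul_eq_one hC1 hCB
  have hcorrupt : ∀ f ∈ F, (∑' z, corrupt P C z * f z) - ∑' z, corrupt Q C z * f z =
      (∑' z, P z * chanOp C f z) - ∑' z, Q z * chanOp C f z := by
    intro f hf
    obtain ⟨b, hb⟩ := hFbd f hf
    rw [tsum_corrupt_mul hP C hb, tsum_corrupt_mul hQ C hb]
  refine Real.sSup_le_mul_sSup_of_subset (zero_le_one.trans hB) ?_ ?_
  · rintro _ ⟨f, hf, rfl⟩
    exact ⟨chanOp C f, hF.chanOp_mem (matInfNorm_of_mem_rowStochastic hC) hC1 hf,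
      (hcorrupt f hf).symm⟩
  · rintro _ ⟨f, hf, rfl⟩
    obtain ⟨h, hh, rfl⟩ := hF.exists_eq_smul_chanOp hC1 hCB hB hf
    refine ⟨_, ⟨h, hh, rfl⟩, ?_⟩
    simp only [hcorrupt h hh, Pi.smul_apply, smul_eq_mul, mul_left_comm _ (matInfNorm B),
      tsum_mul_left, mul_sub]

section ComplementaryLabels

variable {m : ℕ} {a : ℝ}

lemma Fin.castAdd_ne_natAdd {n : ℕ} (i : Fin m) (j : Fin n) :
    Fin.castAdd n i ≠ Fin.natAdd m j :=
  Fin.ne_of_val_ne (by simp only [Fin.val_castAdd, Fin.val_natAdd]; omega)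

lemma Fin.sum_ite_eq_zero_else (i : Fin m) (c : ℝ) :
    ∑ j, (if i = j then 0 else c) = ((m : ℝ) - 1) * c := by
  simp [Finset.sum_ite, Finset.filter_ne, Nat.cast_sub (Nat.one_le_of_lt i.isLt)]

@[simp]
lemma compAlpha_castAdd (y i : Fin m) :
    compAlpha m a y (Fin.castAdd m i) = if i = y then 0 else a / ((m : ℝ) - 1) := by
  simp [compAlpha, Fin.val_inj]

@[simp]
lemma compAlpha_natAdd (y i : Fin m) : compAlpha m a y (Fin.natAdd m i) = 0 := by
  simp [compAlpha]

lemma compConfusion_eq_reindex_fromBlocks (hm : m ≠ 1) :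
    compConfusion m a = reindex finSumFinEquiv finSumFinEquiv
      (fromBlocks ((1 - a) • 1)
        ((a / ((m : ℝ) - 1)) • of fun i j => if i = j then 0 else 1) 0 1) := by
  have hm' : (m : ℝ) - 1 ≠ 0 := sub_ne_zero.2 (by exact_mod_cast hm)
  ext i j
  induction i using Fin.addCases <;> induction j using Fin.addCases <;>
    simp only [compConfusion, Matrix.add_apply, diagonal_apply, Matrix.sum_apply, vecMulVec_apply,
      reindex_apply, submatrix_apply, finSumFinEquiv_symm_apply_castAdd,
      finSumFinEquiv_symm_apply_natAdd, fromBlocks_apply₁₁, fromBlocks_apply₁₂,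
      fromBlocks_apply₂₁, fromBlocks_apply₂₂, compAlpha_castAdd, compAlpha_natAdd] <;>
    simp only [Pi.single_apply, Fin.castAdd_ne_natAdd, (Fin.castAdd_ne_natAdd _ _).symm,
      Fin.natAdd_inj, Fin.castAdd_inj, Fin.sum_ite_eq_zero_else] <;>
    simp [one_apply, mul_div_cancel₀ _ hm']

noncomputable def compConfusionInv (m : ℕ) (a : ℝ) : Matrix (Fin (m + m)) (Fin (m + m)) ℝ :=
  reindex finSumFinEquiv finSumFinEquiv
    (fromBlocks ((1 - a)⁻¹ • 1)
      (-(a / (((m : ℝ) - 1) * (1 - a))) • of fun i j => if i = j then 0 else 1) 0 1)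

lemma compConfusion_mul_compConfusionInv (hm : m ≠ 1) (ha : a ≠ 1) :
    compConfusion m a * compConfusionInv m a = 1 := by
  have ha' : 1 - a ≠ 0 := sub_ne_zero.2 (Ne.symm ha)
  rw [compConfusion_eq_reindex_fromBlocks hm, compConfusionInv, reindex_apply, reindex_apply,
    submatrix_mul_equiv, fromBlocks_multiply]
  have hcoef : (1 - a) * (a / (((m : ℝ) - 1) * (1 - a))) = a / ((m : ℝ) - 1) := by
    field_simp
  simp [smul_smul, ha', hcoef]

lemma compConfusion_mem_rowStochastic (hm : 2 ≤ m) (ha0 : 0 ≤ a) (ha1 : a ≤ 1) :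
    compConfusion m a ∈ rowStochastic ℝ (Fin (m + m)) := by
  have hm' : (0 : ℝ) < m - 1 := by
    rw [sub_pos]; exact_mod_cast hm
  rw [compConfusion_eq_reindex_fromBlocks (by omega), reindex_mem_rowStochastic_iff,
    mem_rowStochastic_iff_sum]
  refine ⟨?_, ?_⟩
  · rintro (i | i) (j | j) <;> simp [one_apply] <;> split_ifs <;> positivity
  · rintro (i | i) <;>
      simp [Fintype.sum_sum_type, one_apply, Fin.sum_ite_eq_zero_else, mul_div_cancel₀ _ hm'.ne']

lemma matInfNorm_compConfusionInv (hm : 2 ≤ m) (ha0 : 0 ≤ a) (ha1 : a < 1) :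
    matInfNorm (compConfusionInv m a) = (1 + a) / (1 - a) := by
  have hm' : (0 : ℝ) < m - 1 := by
    rw [sub_pos]; exact_mod_cast hm
  have ha' : 0 < 1 - a := sub_pos.2 ha1
  have hrow (i : Fin (m + m)) : ∑ j, |compConfusionInv m a i j| =
      Sum.elim (fun _ => (1 + a) / (1 - a)) (fun _ => 1) (finSumFinEquiv.symm i) := by
    rw [compConfusionInv, Matrix.sum_abs_reindex_apply]
    rcases finSumFinEquiv.symm i with i | i <;>
      simp [Fintype.sum_sum_type, one_apply, apply_ite, Fin.sum_ite_eq_zero_else, abs_of_pos ha',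
        abs_of_nonneg (div_nonneg ha0 (mul_pos hm' ha').le)]
    field_simp
  have hκ : 1 ≤ (1 + a) / (1 - a) := by
    rw [le_div_iff₀ ha']; linarith
  have : NeZero (m + m) := ⟨by omega⟩
  refine le_antisymm (matInfNorm_le fun i => ?_) ?_
  · rw [hrow]
    rcases finSumFinEquiv.symm i <;> simp [hκ]
  · have := sum_abs_le_matInfNorm (compConfusionInv m a) (finSumFinEquiv (.inl ⟨0, by omega⟩))
    rwa [hrow, Equiv.symm_apply_apply] at this

end ComplementaryLabels

theorem comp_nnDist_bound_general {X : Type*} {m : ℕ} (hm : 2 ≤ m) (a : ℝ)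
    (ha0 : 0 ≤ a) (ha1 : a < 1)
    (P Q : X × Fin (m + m) → ℝ) (hP : IsPMF P) (hQ : IsPMF Q)
    (F : Set (X × Fin (m + m) → ℝ))
    (hFbd : ∀ f ∈ F, ∃ B : ℝ, ∀ z, |f z| ≤ B)
    (hF : Assumption1 F) :
    nnDist F P Q ≤ ((1 + a) / (1 - a)) *
      nnDist F (corrupt P (compConfusion m a)) (corrupt Q (compConfusion m a)) := by
  have : NeZero (m + m) := ⟨by omega⟩
  rw [← matInfNorm_compConfusionInv hm ha0 ha1]
  exact nnDist_le_matInfNorm_mul_nnDist_corrupt hFbd hF hP.2.1 hQ.2.1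
    (compConfusion_mem_rowStochastic hm ha0 ha1.le)
    (compConfusion_mul_compConfusionInv (by omega) ha1.ne)

theorem comp_nnDist_bound {X : Type*} [Countable X] {m : ℕ} (hm : 2 ≤ m) (a : ℝ)
    (ha0 : 0 ≤ a) (ha1 : a < 1)
    (P Q : X × Fin (m + m) → ℝ) (hP : IsPMF P) (hQ : IsPMF Q)
    (hPz : ∀ (x : X) (y : Fin (m + m)), m ≤ (y : ℕ) → P (x, y) = 0)
    (hQz : ∀ (x : X) (y : Fin (m + m)), m ≤ (y : ℕ) → Q (x, y) = 0)
    (F : Set (X × Fin (m + m) → ℝ))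
    (hFbd : ∀ f ∈ F, ∃ B : ℝ, ∀ z, |f z| ≤ B)
    (hF : Assumption1 F) :
    nnDist F P Q ≤ ((1 + a) / (1 - a)) *
      nnDist F (corrupt P (compConfusion m a)) (corrupt Q (compConfusion m a)) :=
  comp_nnDist_bound_general hm a ha0 ha1 P Q hP hQ F hFbd hF
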